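/- arXiv:1604.00391 — 2 statements merged into one kernel-verified Lean document; each statement's English description precedes it below -/
import Mathlib

section
/- For fixed u ≥ 0 and γ > 0, the proximity operator of γ·ψ(u, ·) at a point x ∈ ℝ equals (x - γ + √((x - γ)² + 4γu))/2, i.e. this value minimizes v ↦ γ·ψ(u,v) + (1/2)(v - x)² over ℝ. -/
/-- Extended Poisson negative log-likelihood. -/
noncomputable def psi (u v : ℝ) : EReal :=
  if 0 < v ∧ 0 < u then ((-u * Real.log v + v : ℝ) : EReal)
  else if 0 ≤ v ∧ u = 0 then ((v : ℝ) : EReal)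
  else ⊤

/-- For `u ≥ 0` and `γ > 0`, the proximity operator of `γ ψ(u, ·)` at `x` is
`(x - γ + √((x - γ)² + 4γu)) / 2`: this value minimizes
`v ↦ γ ψ(u,v) + (1/2)(v - x)²` over `ℝ`, and is its unique minimizer. -/
theorem stmt_1 (u γ x : ℝ) (hu : 0 ≤ u) (hγ : 0 < γ)
    (p : ℝ) (hp : p = (x - γ + Real.sqrt ((x - γ) ^ 2 + 4 * γ * u)) / 2) :
    (∀ v : ℝ,
      (γ : EReal) * psi u p + (((1 / 2) * (p - x) ^ 2 : ℝ) : EReal) ≤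
        (γ : EReal) * psi u v + (((1 / 2) * (v - x) ^ 2 : ℝ) : EReal)) ∧
    (∀ v : ℝ,
      (γ : EReal) * psi u v + (((1 / 2) * (v - x) ^ 2 : ℝ) : EReal) ≤
        (γ : EReal) * psi u p + (((1 / 2) * (p - x) ^ 2 : ℝ) : EReal) → v = p) := by
  have harg : 0 ≤ (x - γ) ^ 2 + 4 * γ * u := by positivity
  have hs2 : Real.sqrt ((x - γ) ^ 2 + 4 * γ * u) ^ 2 = (x - γ) ^ 2 + 4 * γ * u :=
    Real.sq_sqrt harg
  have hsnn : 0 ≤ Real.sqrt ((x - γ) ^ 2 + 4 * γ * u) := Real.sqrt_nonneg _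
  have hgu : 0 ≤ γ * u := mul_nonneg hγ.le hu
  have hkey : p * (p - x + γ) = γ * u := by rw [hp]; nlinarith [hs2]
  have hge : 0 ≤ p - x + γ := by rw [hp]; nlinarith [hs2, hsnn, hgu]
  have hpnn : 0 ≤ p := by rw [hp]; nlinarith [hs2, hsnn, hgu]
  rcases hu.lt_or_eq with hupos | hueq
  · -- u > 0
    have hppos : 0 < p := by
      rcases hpnn.lt_or_eq with h | h
      · exact h
      · exfalso; nlinarith [hkey, mul_pos hγ hupos]
    have hpsip : psi u p = ((-u * Real.log p + p : ℝ) : EReal) := by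
      simp [psi, hppos, hupos]
    have hcore : ∀ v : ℝ, 0 < v → v ≠ p →
        γ * (-u * Real.log p + p) + 1 / 2 * (p - x) ^ 2 <
        γ * (-u * Real.log v + v) + 1 / 2 * (v - x) ^ 2 := by
      intro v hv hne
      have hlog : Real.log (v / p) ≤ v / p - 1 :=
        Real.log_le_sub_one_of_pos (div_pos hv hppos)
      rw [Real.log_div hv.ne' hppos.ne'] at hlog
      have hlog3 : (Real.log v - Real.log p) * p ≤ v - p := by
        have h2 : Real.log v - Real.log p ≤ (v - p) / p := by
          have : v / p - 1 = (v - p) / p := by field_simp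
          linarith [hlog, this ▸ hlog]
        exact (le_div_iff₀ hppos).mp h2
      have hsq : 0 < (v - p) ^ 2 := by
        have h0 : v - p ≠ 0 := sub_ne_zero.mpr hne
        positivity
      nlinarith [mul_le_mul_of_nonneg_left hlog3 hgu, hkey, mul_pos hppos hsq,
        hppos, mul_pos hγ hupos]
    constructor
    · intro v
      by_cases hv : 0 < v
      · have hpsiv : psi u v = ((-u * Real.log v + v : ℝ) : EReal) := by
          simp [psi, hv, hupos]
        rw [hpsip, hpsiv, ← EReal.coe_mul, ← EReal.coe_mul, ← EReal.coe_add, ← EReal.coe_add]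
        rw [EReal.coe_le_coe_iff]
        rcases eq_or_ne v p with rfl | hne
        · exact le_rfl
        · exact (hcore v hv hne).le
      · have hpsiv : psi u v = ⊤ := by
          simp [psi, hv, hupos.ne']
        rw [hpsiv, EReal.mul_top_of_pos (by exact_mod_cast hγ), EReal.top_add_coe]
        exact le_top
    · intro v hle
      by_cases hv : 0 < v
      · have hpsiv : psi u v = ((-u * Real.log v + v : ℝ) : EReal) := by
          simp [psi, hv, hupos]
        rw [hpsip, hpsiv, ← EReal.coe_mul, ← EReal.coe_mul, ← EReal.coe_add, ← EReal.coe_add,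
          EReal.coe_le_coe_iff] at hle
        by_contra hne
        exact absurd hle (not_le.mpr (hcore v hv hne))
      · exfalso
        have hpsiv : psi u v = ⊤ := by
          simp [psi, hv, hupos.ne']
        rw [hpsiv, EReal.mul_top_of_pos (by exact_mod_cast hγ), EReal.top_add_coe, hpsip,
          ← EReal.coe_mul, ← EReal.coe_add] at hle
        exact EReal.coe_ne_top _ (top_le_iff.mp hle)
  · -- u = 0
    subst hueq
    have hpsip : psi 0 p = ((p : ℝ) : EReal) := by
      simp [psi, hpnn]
    have hcore : ∀ v : ℝ, 0 ≤ v → v ≠ p →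
        γ * p + 1 / 2 * (p - x) ^ 2 < γ * v + 1 / 2 * (v - x) ^ 2 := by
      intro v hv hne
      have hsq : 0 < (v - p) ^ 2 := by
        have h0 : v - p ≠ 0 := sub_ne_zero.mpr hne
        positivity
      nlinarith [hkey, mul_nonneg hv hge, hsq]
    constructor
    · intro v
      by_cases hv : 0 ≤ v
      · have hpsiv : psi 0 v = ((v : ℝ) : EReal) := by simp [psi, hv]
        rw [hpsip, hpsiv, ← EReal.coe_mul, ← EReal.coe_mul, ← EReal.coe_add, ← EReal.coe_add,
          EReal.coe_le_coe_iff]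
        rcases eq_or_ne v p with rfl | hne
        · exact le_rfl
        · exact (hcore v hv hne).le
      · have hpsiv : psi 0 v = ⊤ := by
          simp [psi, hv, lt_irrefl]
        rw [hpsiv, EReal.mul_top_of_pos (by exact_mod_cast hγ), EReal.top_add_coe]
        exact le_top
    · intro v hle
      by_cases hv : 0 ≤ v
      · have hpsiv : psi 0 v = ((v : ℝ) : EReal) := by simp [psi, hv]
        rw [hpsip, hpsiv, ← EReal.coe_mul, ← EReal.coe_mul, ← EReal.coe_add, ← EReal.coe_add,
          EReal.coe_le_coe_iff] at hle
        by_contra hne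
        exact absurd hle (not_le.mpr (hcore v hv hne))
      · exfalso
        have hpsiv : psi 0 v = ⊤ := by simp [psi, hv, lt_irrefl]
        rw [hpsiv, EReal.mul_top_of_pos (by exact_mod_cast hγ), EReal.top_add_coe, hpsip,
          ← EReal.coe_mul, ← EReal.coe_add] at hle
        exact EReal.coe_ne_top _ (top_le_iff.mp hle)
end

section
/- Let C = {x ∈ ℝⁿ : xᵢ ≥ bᵢ for all i} and let g: ℝⁿ → ℝ be a proper convex l.s.c. function that is separable across coordinates, g(x) = ∑ᵢ gᵢ(xᵢ), with each prox_{gᵢ} nondecreasing. Then prox_{ι_C + g}(x) = P_C(prox_g(x)), where ι_C is the indicator function of C. -/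
/-- 1D key lemma: if `q` is the unique prox point of `g` at `t`, then
`max q b` minimizes `F(y) = g y + (1/2)(y-t)^2` over `[b, ∞)`, uniquely. -/
lemma key_1d (g : ℝ → ℝ) (hconv : ConvexOn ℝ Set.univ g) (t q : ℝ)
    (hprox : ∀ y, g q + (1 / 2) * (q - t) ^ 2 ≤ g y + (1 / 2) * (y - t) ^ 2)
    (huniq : ∀ y, g y + (1 / 2) * (y - t) ^ 2 ≤ g q + (1 / 2) * (q - t) ^ 2 → y = q)
    (b y : ℝ) (hy : b ≤ y) :
    g (max q b) + (1 / 2) * (max q b - t) ^ 2 ≤ g y + (1 / 2) * (y - t) ^ 2 ∧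
    (g y + (1 / 2) * (y - t) ^ 2 ≤ g (max q b) + (1 / 2) * (max q b - t) ^ 2 →
      y = max q b) := by
  rcases le_or_gt b q with h | h
  · rw [max_eq_left h]
    exact ⟨hprox y, huniq y⟩
  · rw [max_eq_right h.le]
    rcases eq_or_lt_of_le hy with rfl | hy'
    · exact ⟨le_refl _, fun _ => rfl⟩
    · have hqy : q < y := h.trans hy'
      have hd : 0 < y - q := by linarith
      set lam := (y - b) / (y - q) with hlam_def
      have hlam : 0 < lam := div_pos (by linarith) hd
      have hlam1 : lam < 1 := by
        rw [hlam_def, div_lt_one hd]; linarith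
      set mu := 1 - lam with hmu_def
      have hmu : 0 < mu := by simp [hmu_def]; linarith
      have hsum : lam + mu = 1 := by rw [hmu_def]; ring
      have hb : lam * q + mu * y = b := by
        rw [hmu_def, hlam_def]; field_simp; ring
      have hcg : g b ≤ lam * g q + mu * g y := by
        have h2 := hconv.2 (Set.mem_univ q) (Set.mem_univ y) hlam.le hmu.le hsum
        rw [smul_eq_mul, smul_eq_mul, smul_eq_mul, smul_eq_mul, hb] at h2
        exact h2
      have hid : lam * (q - t) ^ 2 + mu * (y - t) ^ 2 - (b - t) ^ 2
          = lam * mu * (q - y) ^ 2 := by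
        rw [← hb, hmu_def]; ring
      have hquad : (b - t) ^ 2 ≤ lam * (q - t) ^ 2 + mu * (y - t) ^ 2 := by
        nlinarith [mul_nonneg (mul_nonneg hlam.le hmu.le) (sq_nonneg (q - y))]
      have hFq : g q + (1 / 2) * (q - t) ^ 2 < g y + (1 / 2) * (y - t) ^ 2 := by
        rcases lt_or_eq_of_le (hprox y) with h' | h'
        · exact h'
        · exact absurd (huniq y h'.ge) (ne_of_gt hqy)
      have hmul := mul_lt_mul_of_pos_left hFq hlam
      have hmain : g b + (1 / 2) * (b - t) ^ 2 < g y + (1 / 2) * (y - t) ^ 2 := by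
        rw [hmu_def] at hcg hquad
        nlinarith [hcg, hquad, hmul]
      exact ⟨hmain.le, fun hle => absurd (lt_of_lt_of_le hmain hle) (lt_irrefl _)⟩

/-- Let `C = {x : ∀ i, b i ≤ x i}` and `g(x) = ∑ i, gᵢ (x i)` a separable convex
lower semicontinuous function whose coordinatewise proximity operators
`p i : ℝ → ℝ` are nondecreasing.  Then `prox_{ι_C + g}(x) = P_C (prox_g x)`,
i.e. `z i = max (p i (x i)) (b i)` lies in `C` and minimizes
`y ↦ g y + (1/2) ‖y - x‖²` over `C`, and it is the unique such minimizer. -/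
theorem stmt_4 (n : ℕ) (b x : Fin n → ℝ) (g : Fin n → ℝ → ℝ)
    (hconv : ∀ i, ConvexOn ℝ Set.univ (g i))
    (hlsc : ∀ i, LowerSemicontinuous (g i))
    (p : Fin n → ℝ → ℝ)
    (hprox : ∀ i t y, g i (p i t) + (1 / 2) * (p i t - t) ^ 2 ≤
      g i y + (1 / 2) * (y - t) ^ 2)
    (hproxuniq : ∀ i t y, g i y + (1 / 2) * (y - t) ^ 2 ≤
      g i (p i t) + (1 / 2) * (p i t - t) ^ 2 → y = p i t)
    (hmono : ∀ i, Monotone (p i))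
    (z : Fin n → ℝ) (hz : ∀ i, z i = max (p i (x i)) (b i)) :
    (∀ i, b i ≤ z i) ∧
    (∀ y : Fin n → ℝ, (∀ i, b i ≤ y i) →
      (∑ i, g i (z i)) + (1 / 2) * (∑ i, (z i - x i) ^ 2) ≤
        (∑ i, g i (y i)) + (1 / 2) * (∑ i, (y i - x i) ^ 2)) ∧
    (∀ y : Fin n → ℝ, (∀ i, b i ≤ y i) →
      (∑ i, g i (y i)) + (1 / 2) * (∑ i, (y i - x i) ^ 2) ≤
        (∑ i, g i (z i)) + (1 / 2) * (∑ i, (z i - x i) ^ 2) → y = z) := by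
  have hkey : ∀ (i : Fin n) (y : ℝ), b i ≤ y →
      g i (z i) + (1 / 2) * (z i - x i) ^ 2 ≤ g i y + (1 / 2) * (y - x i) ^ 2 ∧
      (g i y + (1 / 2) * (y - x i) ^ 2 ≤ g i (z i) + (1 / 2) * (z i - x i) ^ 2 →
        y = z i) := by
    intro i y hy
    rw [hz i]
    exact key_1d (g i) (hconv i) (x i) (p i (x i)) (hprox i (x i))
      (hproxuniq i (x i)) (b i) y hy
  have hsum_eq : ∀ (w : Fin n → ℝ),
      (∑ i, g i (w i)) + (1 / 2) * (∑ i, (w i - x i) ^ 2) =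
      ∑ i, (g i (w i) + (1 / 2) * (w i - x i) ^ 2) := by
    intro w
    rw [Finset.sum_add_distrib, Finset.mul_sum]
  refine ⟨fun i => (hz i) ▸ le_max_right _ _, ?_, ?_⟩
  · intro y hy
    rw [hsum_eq z, hsum_eq y]
    exact Finset.sum_le_sum fun i _ => (hkey i (y i) (hy i)).1
  · intro y hy hle
    rw [hsum_eq z, hsum_eq y] at hle
    funext i
    have hpt : ∀ j, g j (z j) + (1 / 2) * (z j - x j) ^ 2 ≤
        g j (y j) + (1 / 2) * (y j - x j) ^ 2 :=
      fun j => (hkey j (y j) (hy j)).1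
    by_contra hne
    have hi : g i (z i) + (1 / 2) * (z i - x i) ^ 2 <
        g i (y i) + (1 / 2) * (y i - x i) ^ 2 := by
      rcases lt_or_eq_of_le (hpt i) with h | h
      · exact h
      · exact absurd ((hkey i (y i) (hy i)).2 h.ge) hne
    have : (∑ j, (g j (z j) + (1 / 2) * (z j - x j) ^ 2)) <
        ∑ j, (g j (y j) + (1 / 2) * (y j - x j) ^ 2) :=
      Finset.sum_lt_sum (fun j _ => hpt j) ⟨i, Finset.mem_univ i, hi⟩
    linarith
end
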